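/- arXiv:1111.6468 — 3 statements merged into one kernel-verified Lean document; each statement's English description precedes it below -/
import Mathlib

section
/- For a wedge of angle α removed from space and then boosted by a boost of Lorentz factor γ perpendicular to the wedge's leading edge and directed along the wedge's bisector, the effective opening angle α' of the boosted wedge in the plane orthogonal to the defect satisfies tan(α'/2) = γ tan(α/2). -/
/-!
Pairing with `η = (0, w, 0, 0)` just reads off `w` times the `x`-component, so `cos (α'/2)` is the
`x`-component of the normalized side `eb₁`. With `c = cos (α/2)`, `s = sin (α/2)` and
`γ² (1 - w²) = 1` this component is `γ c (1 - w²) / √(1 - c² w²) = c / √(c² + γ² s²)`, and an angle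
in `(0, π/2)` with that cosine has tangent `γ s / c`.
-/

open Real

/-- The Minkowski inner product in 3+1 dimensions with signature `(−+++)`. -/
noncomputable def mdot (x y : Fin 4 → ℝ) : ℝ :=
  -(x 0 * y 0) + x 1 * y 1 + x 2 * y 2 + x 3 * y 3

lemma mdot_x_axis_right (x : Fin 4 → ℝ) (w : ℝ) : mdot x ![0, w, 0, 0] = w * x 1 := by
  simp [mdot]; ring

lemma sq_mul_one_sub_sq_eq_one {w γ : ℝ} (hw : w ^ 2 < 1) (hγ : γ = 1 / √(1 - w ^ 2)) :
    γ ^ 2 * (1 - w ^ 2) = 1 := by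
  rw [hγ, div_pow, sq_sqrt (by linarith)]
  field_simp [show (1 - w ^ 2) ≠ 0 by linarith]

lemma tan_eq_div_of_cos_eq_div_sqrt {θ a b : ℝ} (hθ : 0 ≤ sin θ) (ha : 0 < a) (hb : 0 ≤ b)
    (h : cos θ = a / √(a ^ 2 + b ^ 2)) : tan θ = b / a := by
  have hr : 0 < √(a ^ 2 + b ^ 2) := sqrt_pos.2 (by positivity)
  have hsin : sin θ = b / √(a ^ 2 + b ^ 2) := by
    have hsq : sin θ ^ 2 = (b / √(a ^ 2 + b ^ 2)) ^ 2 := by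
      rw [sin_sq, h, div_pow, div_pow, sq_sqrt (by positivity)]
      field_simp
      ring
    exact (pow_left_inj₀ hθ (by positivity) two_ne_zero).1 hsq
  rw [tan_eq_sin_div_cos, hsin, h]
  field_simp

lemma boosted_side_cos_eq {γ w c s : ℝ} (hγ : 0 ≤ γ) (hγw : γ ^ 2 * (1 - w ^ 2) = 1)
    (hcs : c ^ 2 + s ^ 2 = 1) :
    (γ * c - c * w * (γ * w)) / √(1 - (c * w) ^ 2) = c / √(c ^ 2 + (γ * s) ^ 2) := by
  have hsq : c ^ 2 + (γ * s) ^ 2 = γ ^ 2 * (1 - (c * w) ^ 2) := by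
    linear_combination γ ^ 2 * hcs - c ^ 2 * hγw
  rw [hsq, sqrt_mul (sq_nonneg γ), sqrt_sq hγ]
  have hγ0 : γ ≠ 0 := by rintro rfl; simp at hγw
  rw [show γ * c - c * w * (γ * w) = c / γ by
    field_simp; linear_combination c * hγw, div_div]

theorem boosted_wedge_angle_general (α α' w γ : ℝ)
    (hα : α ∈ Set.Ioo 0 π) (hα' : α' ∈ Set.Ioo 0 π)
    (hw : w ∈ Set.Ioo (0:ℝ) 1)
    (hγ : γ = 1 / Real.sqrt (1 - w^2))
    (v₀ e₁ η : Fin 4 → ℝ)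
    (hv₀ : v₀ = ![1, 0, 0, 0])
    (he₁ : e₁ = ![0, Real.cos (α/2), Real.sin (α/2), 0])
    (hη : η = ![0, w, 0, 0])
    (B : (Fin 4 → ℝ) → (Fin 4 → ℝ))
    (hB : ∀ x, B x = ![γ * (x 0 + w * x 1), γ * (x 1 + w * x 0), x 2, x 3])
    (v₀' e₁' eb₁ : Fin 4 → ℝ)
    (hv₀' : v₀' = B v₀) (he₁' : e₁' = B e₁)
    (heb₁ : eb₁ = fun i =>
      (e₁' i - mdot e₁ η * v₀' i) / Real.sqrt (1 - (mdot e₁ η)^2))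
    (hcos : Real.cos (α'/2) = mdot eb₁ η / w) :
    Real.tan (α'/2) = γ * Real.tan (α/2) := by
  have hc : 0 < cos (α / 2) :=
    cos_pos_of_mem_Ioo ⟨by linarith [hα.1, pi_pos], by linarith [hα.2]⟩
  have hs : 0 < sin (α / 2) :=
    sin_pos_of_pos_of_lt_pi (by linarith [hα.1]) (by linarith [hα.2, pi_pos])
  have hs' : 0 ≤ sin (α' / 2) :=
    sin_nonneg_of_nonneg_of_le_pi (by linarith [hα'.1]) (by linarith [hα'.2, pi_pos])
  have hγw : γ ^ 2 * (1 - w ^ 2) = 1 := sq_mul_one_sub_sq_eq_one (by nlinarith [hw.1, hw.2]) hγ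
  have hγ0 : 0 < γ := by rw [hγ]; exact one_div_pos.2 (sqrt_pos.2 (by nlinarith [hw.1, hw.2]))
  have hcos' : cos (α' / 2) = cos (α / 2) / √(cos (α / 2) ^ 2 + (γ * sin (α / 2)) ^ 2) := by
    subst hv₀ he₁ hη hv₀' he₁' heb₁
    rw [hcos, mdot_x_axis_right, mul_div_cancel_left₀ _ hw.1.ne', mdot_x_axis_right, hB, hB]
    simpa [mul_comm w] using boosted_side_cos_eq hγ0.le hγw (cos_sq_add_sin_sq (α / 2))
  rw [tan_eq_div_of_cos_eq_div_sqrt hs' hc (by positivity) hcos', tan_eq_sin_div_cos,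
    mul_div_assoc]

/-- A wedge of angle `α` (with sides along the unit spacelike vectors
`e₁, e₂`, symmetric about the `x`-axis, orthogonal to `v₀ = (1,0,0,0)` and
`d₀ = (0,0,0,1)`), boosted by the boost `B` with velocity `w` along the bisector
(`x`-direction) of Lorentz factor `γ = (1−w²)^{−1/2}`, has effective opening
angle `α'` in the plane orthogonal to the defect — defined through
`cos(α'/2) = eb'ᵢ · η / |η|` with `eb'ᵢ = (e'ᵢ − (eᵢ·η) v'₀)/√(1−(eᵢ·η)²)`,
`e'ᵢ = B eᵢ`, `v'₀ = B v₀` — satisfying `tan(α'/2) = γ tan(α/2)`. -/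
theorem boosted_wedge_angle (α α' w γ : ℝ)
    (hα : α ∈ Set.Ioo 0 π) (hα' : α' ∈ Set.Ioo 0 π)
    (hw : w ∈ Set.Ioo (0:ℝ) 1)
    (hγ : γ = 1 / Real.sqrt (1 - w^2))
    (v₀ d₀ e₁ e₂ η : Fin 4 → ℝ)
    (hv₀ : v₀ = ![1, 0, 0, 0]) (hd₀ : d₀ = ![0, 0, 0, 1])
    (he₁ : e₁ = ![0, Real.cos (α/2), Real.sin (α/2), 0])
    (he₂ : e₂ = ![0, Real.cos (α/2), -Real.sin (α/2), 0])
    (hη : η = ![0, w, 0, 0])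
    (B : (Fin 4 → ℝ) → (Fin 4 → ℝ))
    (hB : ∀ x, B x = ![γ * (x 0 + w * x 1), γ * (x 1 + w * x 0), x 2, x 3])
    (v₀' e₁' e₂' eb₁ eb₂ : Fin 4 → ℝ)
    (hv₀' : v₀' = B v₀) (he₁' : e₁' = B e₁) (he₂' : e₂' = B e₂)
    (heb₁ : eb₁ = fun i =>
      (e₁' i - mdot e₁ η * v₀' i) / Real.sqrt (1 - (mdot e₁ η)^2))
    (heb₂ : eb₂ = fun i =>
      (e₂' i - mdot e₂ η * v₀' i) / Real.sqrt (1 - (mdot e₂ η)^2))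
    (hcos : Real.cos (α'/2) = mdot eb₁ η / w) :
    Real.tan (α'/2) = γ * Real.tan (α/2) :=
  boosted_wedge_angle_general α α' w γ hα hα' hw hγ v₀ e₁ η hv₀ he₁ hη B hB v₀' e₁' eb₁ hv₀' he₁'
    heb₁ hcos
end

section
/- Let b₁ ≤ b₂ ≤ b₃ be positive reals satisfying the triangle inequality b_i + b_j ≥ b_k for all permutations, and let a > b₃. Define A_i = (1/2) b_i √(a² − b_i²/4) (the area of the isoceles triangle with base b_i and equal legs a). Then A₁ ≤ A₂ ≤ A₃ and A₁ + A₂ ≥ A₃. -/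
open Real

/-- Let `0 < b₁ ≤ b₂ ≤ b₃` satisfy the triangle inequality and let
`a > b₃`.  With `Aᵢ = (1/2) bᵢ √(a² − bᵢ²/4)` the area of the isoceles triangle
with base `bᵢ` and legs `a`, one has `A₁ ≤ A₂ ≤ A₃` and `A₁ + A₂ ≥ A₃`. -/
theorem isoceles_areas_triangle_ineq (a b₁ b₂ b₃ : ℝ)
    (hb₁ : 0 < b₁) (hb₂ : 0 < b₂) (hb₃ : 0 < b₃)
    (h12 : b₁ ≤ b₂) (h23 : b₂ ≤ b₃)
    (htri₁ : b₁ + b₂ ≥ b₃) (htri₂ : b₂ + b₃ ≥ b₁) (htri₃ : b₁ + b₃ ≥ b₂)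
    (ha : a > b₃)
    (A : ℝ → ℝ) (hA : ∀ b, A b = (1/2) * b * Real.sqrt (a^2 - b^2/4)) :
    A b₁ ≤ A b₂ ∧ A b₂ ≤ A b₃ ∧ A b₁ + A b₂ ≥ A b₃ := by
  have rep : ∀ x : ℝ, 0 ≤ x → A x = (1/2) * Real.sqrt (x^2 * (a^2 - x^2/4)) := by
    intro x hx
    rw [hA, Real.sqrt_mul (sq_nonneg x), Real.sqrt_sq hx]; ring
  have key : ∀ x y : ℝ, 0 < x → x ≤ y → y < a → A x ≤ A y := by
    intro x y hx hxy hya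
    rw [rep x hx.le, rep y (hx.le.trans hxy)]
    have hx2 : x^2 ≤ y^2 := by nlinarith
    have hy2 : y^2 ≤ a^2 := by nlinarith
    have h1 : x^2 * (a^2 - x^2/4) ≤ y^2 * (a^2 - y^2/4) := by
      nlinarith [mul_nonneg (sub_nonneg.mpr hx2) (by nlinarith : (0:ℝ) ≤ a^2 - (x^2+y^2)/4)]
    gcongr
  refine ⟨key b₁ b₂ hb₁ h12 (lt_of_le_of_lt h23 ha), key b₂ b₃ hb₂ h23 ha, ?_⟩
  have hs3 : 0 ≤ a^2 - b₃^2/4 := by nlinarith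
  have hsle : ∀ x : ℝ, 0 < x → x ≤ b₃ →
      Real.sqrt (a^2 - b₃^2/4) ≤ Real.sqrt (a^2 - x^2/4) := by
    intro x hx hxb
    apply Real.sqrt_le_sqrt; nlinarith
  have h1 := hsle b₁ hb₁ (h12.trans h23)
  have h2 := hsle b₂ hb₂ h23
  have hs3n := Real.sqrt_nonneg (a^2 - b₃^2/4)
  rw [hA b₁, hA b₂, hA b₃]
  nlinarith [mul_le_mul_of_nonneg_left h1 hb₁.le, mul_le_mul_of_nonneg_left h2 hb₂.le]
end

section
/- Any Fourier mode of an energy–momentum tensor with spacelike wave vector k that is transverse (k^μ T_{μν} = 0) can be realized by a distribution of conical defects: for k_μ = (0,k,0,0) with k > 0, the span of the matrices T̂[φ,v] with entries T̂_{00} = 1, T̂_{02} = T̂_{20} = (v/k)cos φ, T̂_{03} = T̂_{30} = (v/k)sin φ, T̂_{22} = v²/k² − sin²φ, T̂_{23} = T̂_{32} = cos φ sin φ, T̂_{33} = v²/k² − cos²φ, and all entries with index 1 equal to zero, over all φ ∈ [0, π) and v ∈ [0, k], equals the full 6-dimensional space of symmetric 4×4 matrices T with T_{μ1} = T_{1μ}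 = 0 for all μ. -/
open Real

/-- The energy–momentum Fourier mode of a laminar plane wave of defects with
wave vector `k_μ = (0,k,0,0)`, direction angle `φ`, and perpendicular velocity
`v`. -/
noncomputable def Tlp (k φ v : ℝ) : Matrix (Fin 4) (Fin 4) ℝ :=
  !![1, 0, (v/k) * Real.cos φ, (v/k) * Real.sin φ;
     0, 0, 0, 0;
     (v/k) * Real.cos φ, 0, v^2/k^2 - (Real.sin φ)^2, Real.cos φ * Real.sin φ;
     (v/k) * Real.sin φ, 0, Real.cos φ * Real.sin φ, v^2/k^2 - (Real.cos φ)^2]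

/-!
`T̂[φ,v]` is quadratic in `v/k`: its linear coefficient is the momentum mode
`cos φ (e₀e₂ + e₂e₀) + sin φ (e₀e₃ + e₃e₀)` and its quadratic coefficient the projector onto the
plane `x₂x₃` transverse to `k`. Sampling `v = 0, k/2, k` therefore puts both, as well as the
static mode `T̂[φ,0]`, in the span. The static modes at `φ = 0, π/4, π/2`, the momentum modes at
`φ = 0, π/2` and the projector already span the six-dimensional space of transverse symmetric
matrices.
-/

lemma Submodule.mem_of_forall_quadratic_mem {M : Type*} [AddCommGroup M] [Module ℝ M]
    {p : Submodule ℝ M} {A B C : M}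
    (h : ∀ t ∈ Set.Icc (0 : ℝ) 1, A + t • B + t ^ 2 • C ∈ p) :
    A ∈ p ∧ B ∈ p ∧ C ∈ p := by
  let f (t : ℝ) : M := A + t • B + t ^ 2 • C
  have hf₀ : f 0 ∈ p := h 0 (by norm_num)
  have hf₁ : f (1 / 2) ∈ p := h (1 / 2) (by norm_num)
  have hf₂ : f 1 ∈ p := h 1 (by norm_num)
  have hA : A = f 0 := by simp [f]
  have hB : B = (4 : ℝ) • f (1 / 2) - f 1 - (3 : ℝ) • f 0 := by simp only [f]; module
  have hC : C = (2 : ℝ) • (f 1 - (2 : ℝ) • f (1 / 2) + f 0) := by simp only [f]; module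
  refine ⟨hA ▸ hf₀, hB ▸ ?_, hC ▸ ?_⟩
  · exact p.sub_mem (p.sub_mem (p.smul_mem _ hf₁) hf₂) (p.smul_mem _ hf₀)
  · exact p.smul_mem _ (p.add_mem (p.sub_mem hf₂ (p.smul_mem _ hf₁)) hf₀)

def transverseSymmMatrices : Submodule ℝ (Matrix (Fin 4) (Fin 4) ℝ) where
  carrier := {T | T.IsSymm ∧ ∀ μ, T μ 1 = 0 ∧ T 1 μ = 0}
  add_mem' := fun ⟨hA, hA₁⟩ ⟨hB, hB₁⟩ =>
    ⟨hA.add hB, fun μ => by simp [(hA₁ μ).1, (hA₁ μ).2, (hB₁ μ).1, (hB₁ μ).2]⟩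
  zero_mem' := ⟨Matrix.isSymm_zero, fun _ => ⟨rfl, rfl⟩⟩
  smul_mem' c _ := fun ⟨hA, hA₁⟩ => ⟨hA.smul c, fun μ => by simp [(hA₁ μ).1, (hA₁ μ).2]⟩

lemma Tlp_mem_transverseSymmMatrices (k φ v : ℝ) : Tlp k φ v ∈ transverseSymmMatrices := by
  refine ⟨?_, fun μ => ?_⟩
  · ext i j
    fin_cases i <;> fin_cases j <;> simp [Tlp]
  · fin_cases μ <;> simp [Tlp]

noncomputable def momentumMode (φ : ℝ) : Matrix (Fin 4) (Fin 4) ℝ :=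
  !![0, 0, cos φ, sin φ;
     0, 0, 0, 0;
     cos φ, 0, 0, 0;
     sin φ, 0, 0, 0]

def transversePlaneProj : Matrix (Fin 4) (Fin 4) ℝ :=
  !![0, 0, 0, 0;
     0, 0, 0, 0;
     0, 0, 1, 0;
     0, 0, 0, 1]

lemma Tlp_eq_quadratic (k φ v : ℝ) :
    Tlp k φ v = Tlp k φ 0 + (v / k) • momentumMode φ + (v / k) ^ 2 • transversePlaneProj := by
  ext i j
  fin_cases i <;> fin_cases j <;> simp [Tlp, momentumMode, transversePlaneProj, div_pow] <;> ring

lemma eq_sum_of_mem_transverseSymmMatrices (k : ℝ) {T : Matrix (Fin 4) (Fin 4) ℝ}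
    (hT : T ∈ transverseSymmMatrices) :
    T = ((T 0 0 + T 2 2 - T 3 3) / 2 - T 2 3) • Tlp k 0 0
      + ((T 0 0 - T 2 2 + T 3 3) / 2 - T 2 3) • Tlp k (π / 2) 0
      + (2 * T 2 3) • Tlp k (π / 4) 0
      + T 0 2 • momentumMode 0 + T 0 3 • momentumMode (π / 2)
      + ((T 0 0 + T 2 2 + T 3 3) / 2) • transversePlaneProj := by
  obtain ⟨hsymm, hzero⟩ := hT
  ext i j
  fin_cases i <;> fin_cases j <;>
    simp [Tlp, momentumMode, transversePlaneProj, hzero, cos_pi_div_four, sin_pi_div_four,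
      ← hsymm.apply, div_pow] <;> ring_nf <;> simp

def laminarModes (k : ℝ) : Set (Matrix (Fin 4) (Fin 4) ℝ) :=
  {M | ∃ φ ∈ Set.Ico 0 π, ∃ v ∈ Set.Icc 0 k, M = Tlp k φ v}

lemma Tlp_coeffs_mem_span_laminarModes {k φ : ℝ} (hk : 0 < k) (hφ : φ ∈ Set.Ico 0 π) :
    Tlp k φ 0 ∈ Submodule.span ℝ (laminarModes k) ∧
      momentumMode φ ∈ Submodule.span ℝ (laminarModes k) ∧
      transversePlaneProj ∈ Submodule.span ℝ (laminarModes k) := by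
  refine Submodule.mem_of_forall_quadratic_mem fun t ht => ?_
  have hv : t * k ∈ Set.Icc 0 k :=
    ⟨mul_nonneg ht.1 hk.le, mul_le_of_le_one_left hk.le ht.2⟩
  have := Tlp_eq_quadratic k φ (t * k)
  rw [mul_div_cancel_right₀ t hk.ne'] at this
  exact this ▸ Submodule.subset_span ⟨φ, hφ, t * k, hv, rfl⟩

/-- For `k > 0`, the real span of the laminar-plane-wave
energy–momentum modes `T̂[φ,v]` with `φ ∈ [0,π)` and `v ∈ [0,k]` is exactly the
6-dimensional space of symmetric 4×4 matrices that are transverse to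
`k_μ = (0,k,0,0)`, i.e. whose row and column of index 1 vanish. -/
theorem span_of_laminar_modes_eq_transverse (k : ℝ) (hk : 0 < k) :
    (Submodule.span ℝ
        {M : Matrix (Fin 4) (Fin 4) ℝ |
          ∃ φ ∈ Set.Ico 0 π, ∃ v ∈ Set.Icc 0 k, M = Tlp k φ v} : Set _) =
      {T : Matrix (Fin 4) (Fin 4) ℝ | T.IsSymm ∧ ∀ μ, T μ 1 = 0 ∧ T 1 μ = 0} := by
  change _ = (transverseSymmMatrices : Set (Matrix (Fin 4) (Fin 4) ℝ))
  congr 1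
  refine le_antisymm (Submodule.span_le.2 ?_) fun T hT => ?_
  · rintro _ ⟨φ, -, v, -, rfl⟩
    exact Tlp_mem_transverseSymmMatrices k φ v
  have h₀ := Tlp_coeffs_mem_span_laminarModes (φ := 0) hk ⟨le_rfl, pi_pos⟩
  have h₁ := Tlp_coeffs_mem_span_laminarModes (φ := π / 2) hk
    ⟨by positivity, by linarith [pi_pos]⟩
  have h₂ := Tlp_coeffs_mem_span_laminarModes (φ := π / 4) hk
    ⟨by positivity, by linarith [pi_pos]⟩
  rw [eq_sum_of_mem_transverseSymmMatrices k hT]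
  refine add_mem (add_mem (add_mem (add_mem (add_mem ?_ ?_) ?_) ?_) ?_) ?_ <;>
    apply Submodule.smul_mem
  exacts [h₀.1, h₁.1, h₂.1, h₀.2.1, h₁.2.1, h₀.2.2]
end
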